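/- arXiv:0806.1348 — 5 statements merged into one kernel-verified Lean document; each statement's English description precedes it below -/
import Mathlib

section
/- For every positive integer $m$, every even cycle $C_{2n}$ is $(2m,m)$-edge-choosable: for any assignment of lists of size $2m$ to the edges of $C_{2n}$, one can choose $m$ colors for each edge from its list so that incident edges receive disjoint sets of colors. -/
/-- Two edges are incident if they share a vertex. -/
def EdgeIncident {V : Type*} (e f : Sym2 V) : Prop := ∃ v, v ∈ e ∧ v ∈ f

/-- `G` is `(r,s)`-edge-choosable: from any assignment of `r`-element lists to the edges one can
select `s` colors per edge from its list so that incident edges receive disjoint sets. -/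
def EdgeChoosable {V : Type*} (G : SimpleGraph V) (r s : ℕ) : Prop :=
  ∀ L : Sym2 V → Finset ℕ, (∀ e ∈ G.edgeSet, (L e).card = r) →
    ∃ C : Sym2 V → Finset ℕ,
      (∀ e ∈ G.edgeSet, C e ⊆ L e ∧ (C e).card = s) ∧
      ∀ e ∈ G.edgeSet, ∀ f ∈ G.edgeSet, e ≠ f → EdgeIncident e f → Disjoint (C e) (C f)

/-- Degree of a vertex, measured as the number of its neighbors. -/
noncomputable def edeg {V : Type*} (H : SimpleGraph V) (v : V) : ℕ := (H.neighborSet v).ncard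

/-!
Orient the cycle `C_{2n}` and view its edges `eᵢ = {i, i + 1}` as the vertices of the directed
cycle `i → i + 1` on `ℤ/2n`. Colours are handed out one at a time: when colour `a` is treated,
let `A` be the set of edges that still need colours and have `a` in their list, and give `a` to a
kernel `K` of the directed cycle restricted to `A` (independent, and every `i ∈ A \ K` has
`i + 1 ∈ K`). Such a kernel exists: if `A` is everything, take the even positions (this is where
the length is even); otherwise take the points at even distance from the next point outside `A`.
Then an edge `i` that ends with fewer than `m` colours passed every colour it did not take on to
edge `i + 1`, so `2m - #cᵢ ≤ #cᵢ₊₁ ≤ m`, a contradiction.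
-/

open Finset Fin.CommRing SimpleGraph

variable {α β : Type*}

/-- A kernel of the digraph on `A` whose arcs are `i → σ i`. -/
structure IsKernel (σ : α → α) (A K : Set α) : Prop where
  subset : K ⊆ A
  map_notMem : ∀ i ∈ K, σ i ∉ K
  map_mem : ∀ i ∈ A, i ∉ K → σ i ∈ K

lemma isKernel_of_parity (σ : α → α) {A : Set α} (p : α → Prop)
    (hstep : ∀ i, σ i ∈ A → (p i ↔ ¬p (σ i))) (hlast : ∀ i, σ i ∉ A → p i) :
    IsKernel σ A {i | i ∈ A ∧ p i} where
  subset _ hi := hi.1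
  map_notMem i hi hσi := (hstep i hσi.1).1 hi.2 hσi.2
  map_mem i hi hiK := by
    by_cases hσi : σ i ∈ A
    · exact ⟨hσi, not_not.1 fun h => hiK ⟨hi, (hstep i hσi).2 h⟩⟩
    · exact absurd ⟨hi, hlast i hσi⟩ hiK

lemma exists_isKernel_of_forall_exists_iterate_notMem {σ : α → α} {A : Set α}
    (hA : ∀ i, ∃ t, σ^[t + 1] i ∉ A) : ∃ K, IsKernel σ A K := by
  classical
  let D i := Nat.find (hA i)
  have hD_succ : ∀ i, σ i ∈ A → D i = D (σ i) + 1 := fun i hσi =>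
    Nat.find_comp_succ (hA i) (by simpa only [Function.iterate_succ_apply] using hA (σ i))
      (by simpa using hσi)
  have hD_zero : ∀ i, σ i ∉ A → D i = 0 := fun i hσi => (Nat.find_eq_zero _).2 (by simpa using hσi)
  refine ⟨_, isKernel_of_parity σ (fun i => Even (D i)) (fun i hσi => ?_) (fun i hσi => ?_)⟩
  · rw [hD_succ i hσi, Nat.even_add_one]
  · simp [hD_zero i hσi]

lemma Fin.even_val_add_one_iff {N : ℕ} [NeZero N] (hN : Even N) (i : Fin N) :
    Even (i + 1).val ↔ ¬Even i.val := by
  rw [Fin.val_add, Fin.val_one', Nat.add_mod_mod, ← Nat.even_add_one]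
  rcases (show i.val + 1 ≤ N from i.isLt).lt_or_eq with h | h
  · rw [Nat.mod_eq_of_lt h]
  · rw [h, Nat.mod_self]; simpa using hN

lemma Fin.exists_isKernel_add_one {N : ℕ} [NeZero N] (hN : Even N) (A : Set (Fin N)) :
    ∃ K, IsKernel (· + 1) A K := by
  by_cases hA : A = Set.univ
  · refine ⟨_, isKernel_of_parity _ (fun i => Even i.val)
      (fun i _ => by rw [Fin.even_val_add_one_iff hN, not_not])
      (fun i h => absurd (hA ▸ Set.mem_univ _) h)⟩
  · obtain ⟨i₀, hi₀⟩ := (Set.ne_univ_iff_exists_notMem A).1 hA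
    refine exists_isKernel_of_forall_exists_iterate_notMem fun i => ⟨(i₀ - i - 1).val, ?_⟩
    rwa [add_right_iterate_apply, nsmul_one, Nat.cast_succ, Fin.cast_val_eq_self,
      show i + (i₀ - i - 1 + 1) = i₀ by ring]

variable [DecidableEq β]

/-- The invariant of the greedy choice once the colours of `S` have been handed out. -/
structure IsSaturatedChoice (σ : α → α) (L : α → Finset β) (m : ℕ) (S : Finset β)
    (c : α → Finset β) : Prop where
  subset : ∀ i, c i ⊆ L i ∩ S
  card_le : ∀ i, #(c i) ≤ m
  disjoint : ∀ i, Disjoint (c i) (c (σ i))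
  sdiff_subset : ∀ i, #(c i) < m → (L i ∩ S) \ c i ⊆ c (σ i)

namespace IsSaturatedChoice

variable {σ : α → α} {L : α → Finset β} {m : ℕ} {S : Finset β} {c : α → Finset β}

lemma empty : IsSaturatedChoice σ L m ∅ fun _ => ∅ where
  subset _ := empty_subset _
  card_le _ := by simp
  disjoint _ := disjoint_empty_left _
  sdiff_subset _ _ := by simp

lemma insert (h : IsSaturatedChoice σ L m S c) {a : β} (ha : a ∉ S) {K : Set α}
    [DecidablePred (· ∈ K)] (hK : IsKernel σ {i | a ∈ L i ∧ #(c i) < m} K) :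
    IsSaturatedChoice σ L m (insert a S) fun i => if i ∈ K then insert a (c i) else c i := by
  have ha_notMem : ∀ i, a ∉ c i := fun i hai => ha (mem_inter.1 (h.subset i hai)).2
  have hc_subset : ∀ i, c i ⊆ if i ∈ K then Insert.insert a (c i) else c i := fun i => by
    split_ifs
    exacts [subset_insert _ _, Subset.rfl]
  constructor
  · intro i
    split_ifs with hi
    · rw [inter_insert_of_mem (hK.subset hi).1]
      exact insert_subset_insert _ (h.subset i)
    · exact (h.subset i).trans (inter_subset_inter_left (subset_insert _ _))
  · intro i
    split_ifs with hi
    exacts [(card_insert_le _ _).trans (hK.subset hi).2, h.card_le i]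
  · intro i
    have hσ := hK.map_notMem i
    split_ifs with hi hσi hσi
    · exact absurd hσi (hσ hi)
    · exact disjoint_insert_left.2 ⟨ha_notMem _, h.disjoint i⟩
    · exact disjoint_insert_right.2 ⟨ha_notMem _, h.disjoint i⟩
    · exact h.disjoint i
  · intro i hi x hx
    rw [mem_sdiff, mem_inter] at hx
    obtain ⟨⟨hxL, hxS⟩, hxc⟩ := hx
    have hci : #(c i) < m := (card_le_card (hc_subset i)).trans_lt hi
    rcases mem_insert.1 hxS with rfl | hxS
    · have hiK : i ∉ K := fun hiK => hxc (by simp [hiK])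
      simp [hK.map_mem i ⟨hxL, hci⟩ hiK]
    · refine hc_subset (σ i) (h.sdiff_subset i hci (mem_sdiff.2 ⟨mem_inter.2 ⟨hxL, hxS⟩, ?_⟩))
      exact fun hxc' => hxc (hc_subset i hxc')

end IsSaturatedChoice

lemma exists_isSaturatedChoice_of_exists_isKernel {σ : α → α} (hker : ∀ A, ∃ K, IsKernel σ A K)
    (L : α → Finset β) (m : ℕ) (S : Finset β) : ∃ c, IsSaturatedChoice σ L m S c := by
  classical
  induction S using Finset.induction_on with
  | empty => exact ⟨_, IsSaturatedChoice.empty⟩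
  | insert a S ha ih =>
    obtain ⟨c, hc⟩ := ih
    obtain ⟨K, hK⟩ := hker {i | a ∈ L i ∧ #(c i) < m}
    exact ⟨_, hc.insert ha hK⟩

theorem exists_disjoint_map_of_exists_isKernel [Fintype α] {σ : α → α}
    (hker : ∀ A, ∃ K, IsKernel σ A K) {m : ℕ} (L : α → Finset β) (hL : ∀ i, 2 * m ≤ #(L i)) :
    ∃ c : α → Finset β, (∀ i, c i ⊆ L i) ∧ (∀ i, #(c i) = m) ∧ ∀ i, Disjoint (c i) (c (σ i)) := by
  obtain ⟨c, hc⟩ := exists_isSaturatedChoice_of_exists_isKernel hker L m (univ.biUnion L)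
  have hL_inter : ∀ i, L i ∩ univ.biUnion L = L i := fun i =>
    inter_eq_left.2 (subset_biUnion_of_mem L (mem_univ i))
  have hcL : ∀ i, c i ⊆ L i := fun i => hL_inter i ▸ hc.subset i
  refine ⟨c, hcL, fun i => (hc.card_le i).antisymm (not_lt.1 fun hi => ?_), hc.disjoint⟩
  have hsdiff := card_le_card (hL_inter i ▸ hc.sdiff_subset i hi)
  rw [card_sdiff_of_subset (hcL i)] at hsdiff
  have := hL i
  have := hc.card_le (σ i)
  omega

section CycleGraph

variable {N : ℕ} [NeZero N]

lemma cycleGraph_adj_add_one (hN : 1 < N) (i : Fin N) : (cycleGraph N).Adj i (i + 1) := by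
  rw [cycleGraph_adj', add_sub_cancel_left, Fin.val_one', Nat.mod_eq_of_lt hN]
  exact Or.inr rfl

lemma Fin.eq_add_one_of_val_sub_eq_one {u v : Fin N} (h : (u - v).val = 1) : u = v + 1 := by
  have hN : 1 < N := h ▸ (u - v).isLt
  exact sub_eq_iff_eq_add'.1 (Fin.ext (by rw [h, Fin.val_one', Nat.mod_eq_of_lt hN]))

lemma exists_mk_add_one_eq_of_mem_edgeSet {e : Sym2 (Fin N)} (he : e ∈ (cycleGraph N).edgeSet) :
    ∃ i, s(i, i + 1) = e := by
  induction e using Sym2.ind with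
  | _ u v =>
  rcases cycleGraph_adj'.1 ((mem_edgeSet _).1 he) with h | h
  · exact ⟨v, by rw [Fin.eq_add_one_of_val_sub_eq_one h, Sym2.eq_swap]⟩
  · exact ⟨u, by rw [Fin.eq_add_one_of_val_sub_eq_one h]⟩

lemma eq_add_one_or_eq_add_one_of_edgeIncident {i j : Fin N} (hne : s(i, i + 1) ≠ s(j, j + 1))
    (h : EdgeIncident s(i, i + 1) s(j, j + 1)) : j = i + 1 ∨ i = j + 1 := by
  obtain ⟨v, hvi, hvj⟩ := h
  rw [Sym2.mem_iff] at hvi hvj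
  rcases hvi with rfl | rfl <;> rcases hvj with h | h
  · exact absurd (congrArg (fun k => s(k, k + 1)) h) hne
  · exact Or.inr h
  · exact Or.inl h.symm
  · exact absurd (congrArg (fun k => s(k, k + 1)) (add_right_cancel h)) hne

theorem cycleGraph_edgeChoosable (hN : Even N) (m : ℕ) :
    EdgeChoosable (cycleGraph N) (2 * m) m := by
  intro L hL
  have hN1 : 1 < N := by
    obtain ⟨k, hk⟩ := hN
    have := NeZero.ne N
    omega
  obtain ⟨c, hcL, hc_card, hc_disjoint⟩ := exists_disjoint_map_of_exists_isKernel
    (Fin.exists_isKernel_add_one hN) (fun i => L s(i, i + 1))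
    (fun i => (hL _ (cycleGraph_adj_add_one hN1 i)).ge)
  choose idx hidx using fun e (he : e ∈ (cycleGraph N).edgeSet) =>
    exists_mk_add_one_eq_of_mem_edgeSet he
  refine ⟨fun e => if he : e ∈ (cycleGraph N).edgeSet then c (idx e he) else ∅, ?_, ?_⟩
  · intro e he
    simp only [dif_pos he]
    have hce := hcL (idx e he)
    rw [hidx e he] at hce
    exact ⟨hce, hc_card _⟩
  · intro e he f hf hne hinc
    simp only [dif_pos he, dif_pos hf]
    rw [← hidx e he, ← hidx f hf] at hne hinc
    rcases eq_add_one_or_eq_add_one_of_edgeIncident hne hinc with h | h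
    · rw [h]; exact hc_disjoint _
    · rw [h]; exact (hc_disjoint _).symm

end CycleGraph

theorem stmt1_general (n m : ℕ) (hn : 2 ≤ n) :
    EdgeChoosable (SimpleGraph.cycleGraph (2 * n)) (2 * m) m := by
  have : NeZero (2 * n) := ⟨by omega⟩
  exact cycleGraph_edgeChoosable (even_two_mul n) m

/-- Every even cycle `C_{2n}` is `(2m, m)`-edge-choosable. -/
theorem stmt1 (n m : ℕ) (hn : 2 ≤ n) (hm : 0 < m) :
    EdgeChoosable (SimpleGraph.cycleGraph (2 * n)) (2 * m) m :=
  stmt1_general n m hn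
end

section
/- Every graph with maximum degree at most 3 that admits a proper 3-edge-coloring is a subgraph of some 3-regular graph admitting a proper 3-edge-coloring. -/
/-!
Take two copies of `G` and join the two copies of every vertex of degree less than `k` by a
rung. Deficient vertices gain one degree and the others keep degree `k`, so `k` rounds of this
doubling give a `k`-regular graph. The coloring survives each round: a vertex of degree less
than `k` misses one of the `k` colors, and that color goes on its rung.
-/

def IsProperEdgeColoring {V α : Type*} (G : SimpleGraph V) (c : Sym2 V → α) : Prop :=
  ∀ e ∈ G.edgeSet, ∀ f ∈ G.edgeSet, e ≠ f → EdgeIncident e f → c e ≠ c f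

section EdgeColoring

variable {V α : Type*} {G : SimpleGraph V} {c : Sym2 V → α}

theorem isProperEdgeColoring_iff :
    IsProperEdgeColoring G c ↔
      ∀ ⦃x y z⦄, G.Adj x y → G.Adj x z → y ≠ z → c s(x, y) ≠ c s(x, z) := by
  constructor
  · intro hc x y z hxy hxz hyz
    exact hc _ hxy _ hxz (mt Sym2.congr_right.mp hyz)
      ⟨x, Sym2.mem_mk_left x y, Sym2.mem_mk_left x z⟩
  · rintro hc e he f hf hef ⟨x, hxe, hxf⟩
    obtain ⟨y, rfl⟩ := Sym2.mem_iff_exists.mp hxe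
    obtain ⟨z, rfl⟩ := Sym2.mem_iff_exists.mp hxf
    exact hc he hf (mt (congrArg _) hef)

theorem exists_color_forall_ne_of_edeg_lt [Fintype α] [Finite V] {v : V}
    (hv : edeg G v < Fintype.card α) : ∃ i : α, ∀ w, G.Adj v w → c s(v, w) ≠ i := by
  have hlt : ((fun w => c s(v, w)) '' G.neighborSet v).ncard < (Set.univ : Set α).ncard := by
    rw [Set.ncard_univ, Nat.card_eq_fintype_card]
    exact (Set.ncard_image_le (Set.toFinite _)).trans_lt hv
  obtain ⟨i, -, hi⟩ := Set.exists_mem_notMem_of_ncard_lt_ncard hlt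
  exact ⟨i, fun w hw hwi => hi ⟨w, hw, hwi⟩⟩

theorem exists_missing_color [Fintype α] [Finite V] (c : Sym2 V → α) :
    ∃ m : V → α,
      ∀ v, edeg G v < Fintype.card α → ∀ w, G.Adj v w → c s(v, w) ≠ m v := by
  have hmiss (v : V) :
      ∃ i, edeg G v < Fintype.card α → ∀ w, G.Adj v w → c s(v, w) ≠ i := by
    by_cases hv : edeg G v < Fintype.card α
    · obtain ⟨i, hi⟩ := exists_color_forall_ne_of_edeg_lt (c := c) hv
      exact ⟨i, fun _ => hi⟩
    · exact ⟨c s(v, v), fun h => absurd h hv⟩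
  choose m hm using hmiss
  exact ⟨m, hm⟩

end EdgeColoring

section ExtendDiag

variable {V α : Type*} [DecidableEq V] (c : Sym2 V → α) (m : V → α)

/-- Under `Sym2.map Prod.fst` the rungs of `rungDouble` become the loops `s(v, v)`. -/
def extendDiag : Sym2 V → α :=
  Sym2.lift ⟨fun v w => if v = w then m v else c s(v, w), fun v w => by
    by_cases h : v = w
    · subst h; rfl
    · simp only [if_neg h, if_neg (Ne.symm h), Sym2.eq_swap]⟩

theorem extendDiag_mk_self (v : V) : extendDiag c m s(v, v) = m v := by
  simp [extendDiag]

theorem extendDiag_mk_of_ne {v w : V} (h : v ≠ w) : extendDiag c m s(v, w) = c s(v, w) := by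
  simp [extendDiag, h]

end ExtendDiag

def rungDouble {V : Type*} (G : SimpleGraph V) (k : ℕ) : SimpleGraph (V × Bool) where
  Adj x y := (x.2 = y.2 ∧ G.Adj x.1 y.1) ∨ (x.1 = y.1 ∧ x.2 ≠ y.2 ∧ edeg G x.1 < k)
  symm := by
    constructor
    rintro x y (⟨h1, h2⟩ | ⟨h1, h2, h3⟩)
    · exact Or.inl ⟨h1.symm, h2.symm⟩
    · exact Or.inr ⟨h1.symm, Ne.symm h2, h1 ▸ h3⟩
  loopless := by
    constructor
    rintro x (⟨_, h⟩ | ⟨_, h, _⟩)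
    · exact G.loopless.irrefl _ h
    · exact h rfl

namespace rungDouble

variable {V : Type*} {G : SimpleGraph V} {k : ℕ}

theorem adj_layer {v w : V} (b : Bool) (h : G.Adj v w) : (rungDouble G k).Adj (v, b) (w, b) :=
  Or.inl ⟨rfl, h⟩

theorem neighborSet_eq (v : V) (a : Bool) :
    (rungDouble G k).neighborSet (v, a) =
      (fun w => (w, a)) '' G.neighborSet v ∪ {x | edeg G v < k ∧ x = (v, !a)} := by
  ext ⟨w, b⟩
  cases a <;> cases b <;> simp [rungDouble, and_comm, eq_comm]

theorem edeg_eq [Finite V] (v : V) (a : Bool) :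
    edeg (rungDouble G k) (v, a) = edeg G v + if edeg G v < k then 1 else 0 := by
  have hlayer : ((fun w => (w, a)) '' G.neighborSet v).ncard = edeg G v :=
    Set.ncard_image_of_injective _ (Prod.mk_left_injective a)
  have hdisj : Disjoint ((fun w => (w, a)) '' G.neighborSet v)
      {x | edeg G v < k ∧ x = (v, !a)} := by
    rw [Set.disjoint_left]
    rintro _ ⟨w, -, rfl⟩ ⟨-, h⟩
    cases a <;> simp at h
  rw [edeg, neighborSet_eq, Set.ncard_union_eq hdisj (Set.toFinite _) (Set.toFinite _), hlayer]
  split_ifs with h <;> simp [h]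

theorem isProperEdgeColoring [DecidableEq V] {α : Type*} {c : Sym2 V → α}
    (hc : IsProperEdgeColoring G c) {m : V → α}
    (hm : ∀ v, edeg G v < k → ∀ w, G.Adj v w → c s(v, w) ≠ m v) :
    IsProperEdgeColoring (rungDouble G k) (extendDiag c m ∘ Sym2.map Prod.fst) := by
  rw [isProperEdgeColoring_iff] at hc ⊢
  rintro ⟨v, a⟩ ⟨w, b⟩ ⟨u, b'⟩ hy hz hyz
  simp only [Function.comp_apply, Sym2.map_mk]
  rcases hy with ⟨rfl, hvw⟩ | ⟨rfl, hab, hv⟩ <;>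
    rcases hz with ⟨rfl, hvu⟩ | ⟨rfl, hab', hv'⟩
  · rw [extendDiag_mk_of_ne c m hvw.ne, extendDiag_mk_of_ne c m hvu.ne]
    exact hc hvw hvu fun h => hyz (by subst h; rfl)
  · rw [extendDiag_mk_of_ne c m hvw.ne, extendDiag_mk_self]
    exact hm v hv' w hvw
  · rw [extendDiag_mk_self, extendDiag_mk_of_ne c m hvu.ne]
    exact (hm v hv u hvu).symm
  · obtain rfl : b = b' := by cases a <;> cases b <;> cases b' <;> simp_all
    exact absurd rfl hyz

end rungDouble

theorem exists_regular_supergraph_of_edeg_add_le (k n : ℕ) {V : Type} [Fintype V]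
    (G : SimpleGraph V) (hmax : ∀ v, edeg G v ≤ k) (hmin : ∀ v, k ≤ edeg G v + n)
    (hc : ∃ c : Sym2 V → Fin k, IsProperEdgeColoring G c) :
    ∃ (W : Type) (_ : Fintype W) (H : SimpleGraph W) (φ : V ↪ W),
      (∀ u v, G.Adj u v → H.Adj (φ u) (φ v)) ∧ (∀ w, edeg H w = k) ∧
      ∃ c : Sym2 W → Fin k, IsProperEdgeColoring H c := by
  induction n generalizing V with
  | zero => exact ⟨V, inferInstance, G, .refl V, fun _ _ h => h,
      fun v => le_antisymm (hmax v) (hmin v), hc⟩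
  | succ n ih =>
    classical
    obtain ⟨c, hc⟩ := hc
    obtain ⟨m, hm⟩ := exists_missing_color (G := G) c
    rw [Fintype.card_fin] at hm
    obtain ⟨W, _, H, φ, hφ, hreg, hcH⟩ := ih (rungDouble G k)
      (fun ⟨v, a⟩ => by have := hmax v; rw [rungDouble.edeg_eq]; split_ifs <;> omega)
      (fun ⟨v, a⟩ => by have := hmin v; rw [rungDouble.edeg_eq]; split_ifs <;> omega)
      ⟨_, rungDouble.isProperEdgeColoring hc hm⟩
    exact ⟨W, inferInstance, H, (Function.Embedding.sectL V false).trans φ,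
      fun u v h => hφ _ _ (rungDouble.adj_layer false h), hreg, hcH⟩

/-- Every graph with maximum degree at most 3 admitting a proper 3-edge-coloring embeds as a
subgraph of some 3-regular graph admitting a proper 3-edge-coloring. -/
theorem stmt3 {V : Type} [Fintype V] (G : SimpleGraph V)
    (hdeg : ∀ v, edeg G v ≤ 3)
    (h3 : ∃ c : Sym2 V → Fin 3,
      ∀ e ∈ G.edgeSet, ∀ f ∈ G.edgeSet, e ≠ f → EdgeIncident e f → c e ≠ c f) :
    ∃ (W : Type) (_ : Fintype W) (H : SimpleGraph W) (φ : V ↪ W),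
      (∀ u v, G.Adj u v → H.Adj (φ u) (φ v)) ∧
      (∀ w, edeg H w = 3) ∧
      (∃ c : Sym2 W → Fin 3,
        ∀ e ∈ H.edgeSet, ∀ f ∈ H.edgeSet, e ≠ f → EdgeIncident e f → c e ≠ c f) :=
  exists_regular_supergraph_of_edeg_add_le 3 3 G hdeg (fun _ => Nat.le_add_left 3 _) h3
end

section
/- Let $G$ be the 3-regular graph formed from two disjoint copies of $K_4$ by subdividing one edge in each copy and joining the two subdivision vertices by an edge. Then $G$ is not $(6,2)$-edge-colorable: there is no choice of 2 colors from a fixed palette of 6 colors for each edge such that incident edges receive disjoint color sets. -/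
/-- The 3-regular graph formed from two disjoint copies of `K₄` by subdividing one edge in
each copy and joining the two subdivision vertices. -/
def twoK4 : SimpleGraph (Fin 10) := SimpleGraph.fromEdgeSet
  {s(0, 2), s(0, 3), s(1, 2), s(1, 3), s(2, 3), s(0, 4), s(1, 4),
   s(5, 7), s(5, 8), s(6, 7), s(6, 8), s(7, 8), s(5, 9), s(6, 9), s(4, 9)}

/-! Six colors, two per edge, and three edges at every vertex: each color appears exactly once
at each vertex, so every color class is a perfect matching. The central edge is a bridge whose
removal leaves a side with five vertices, so by parity every perfect matching contains it. Hence
all six colors lie on the central edge, which carries only two. -/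

namespace SimpleGraph

variable {V κ : Type*} {G : SimpleGraph V}

structure IsMultiEdgeColoring (G : SimpleGraph V) (s : ℕ) (C : Sym2 V → Finset κ) : Prop where
  card_eq : ∀ e ∈ G.edgeSet, (C e).card = s
  disjoint :
    ∀ e ∈ G.edgeSet, ∀ f ∈ G.edgeSet, e ≠ f → EdgeIncident e f → Disjoint (C e) (C f)

def colorClass (G : SimpleGraph V) (C : Sym2 V → Finset κ) (c : κ) : G.Subgraph where
  verts := Set.univ
  Adj v w := G.Adj v w ∧ c ∈ C s(v, w)
  adj_sub h := h.1
  edge_vert _ := Set.mem_univ _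
  symm := ⟨fun _ _ h ↦ ⟨h.1.symm, Sym2.eq_swap ▸ h.2⟩⟩

theorem colorClass_adj {C : Sym2 V → Finset κ} {c : κ} {v w : V} :
    (G.colorClass C c).Adj v w ↔ G.Adj v w ∧ c ∈ C s(v, w) :=
  Iff.rfl

namespace IsMultiEdgeColoring

variable {s : ℕ} {C : Sym2 V → Finset κ}

theorem disjoint_of_adj (hC : G.IsMultiEdgeColoring s C) {v w w' : V} (hw : G.Adj v w)
    (hw' : G.Adj v w') (hne : w ≠ w') : Disjoint (C s(v, w)) (C s(v, w')) :=
  hC.disjoint _ hw _ hw' (hne ∘ Sym2.congr_right.mp)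
    ⟨v, Sym2.mem_mk_left _ _, Sym2.mem_mk_left _ _⟩

theorem exists_adj_mem [Fintype κ] [DecidableEq κ] (hC : G.IsMultiEdgeColoring s C) (v : V)
    [Fintype (G.neighborSet v)] (hdeg : G.degree v * s = Fintype.card κ) (c : κ) :
    ∃ w, G.Adj v w ∧ c ∈ C s(v, w) := by
  have hcover : (G.neighborFinset v).biUnion (fun w ↦ C s(v, w)) = Finset.univ := by
    refine Finset.eq_univ_of_card _ ?_
    rw [Finset.card_biUnion, Finset.sum_congr rfl, Finset.sum_const, smul_eq_mul,
      card_neighborFinset_eq_degree, hdeg]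
    · intro w hw
      exact hC.card_eq _ ((mem_neighborFinset _ _ _).mp hw)
    · intro w hw w' hw' hne
      exact hC.disjoint_of_adj ((mem_neighborFinset _ _ _).mp hw)
        ((mem_neighborFinset _ _ _).mp hw') hne
  have hc : c ∈ (G.neighborFinset v).biUnion (fun w ↦ C s(v, w)) := hcover ▸ Finset.mem_univ c
  simpa using hc

theorem isPerfectMatching_colorClass [Fintype κ] [DecidableEq κ] [G.LocallyFinite] {d : ℕ}
    (hC : G.IsMultiEdgeColoring s C) (hreg : G.IsRegularOfDegree d)
    (hd : d * s = Fintype.card κ) (c : κ) : (G.colorClass C c).IsPerfectMatching := by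
  refine ⟨fun v _ ↦ ?_, fun _ ↦ Set.mem_univ _⟩
  obtain ⟨w, hw⟩ := hC.exists_adj_mem v (hreg v ▸ hd) c
  refine ⟨w, colorClass_adj.mpr hw, fun w' hw' ↦ ?_⟩
  replace hw' := colorClass_adj.mp hw'
  by_contra hne
  exact Finset.disjoint_left.mp (hC.disjoint_of_adj hw'.1 hw.1 hne) hw'.2 hw.2

end IsMultiEdgeColoring

theorem Subgraph.IsPerfectMatching.mem_edgeSet_of_odd {M : G.Subgraph} (hM : M.IsPerfectMatching)
    {S : Finset V} (hS : Odd S.card) {e : Sym2 V}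
    (hcut : ∀ v ∈ S, ∀ w ∉ S, G.Adj v w → s(v, w) = e) : e ∈ M.edgeSet := by
  by_contra he
  have hclosed : ∀ v ∈ S, ∀ w, M.Adj v w → w ∈ S := by
    intro v hv w hvw
    by_contra hw
    exact he (hcut v hv w hw (M.adj_sub hvw) ▸ hvw)
  have hmatch : (M.induce S).IsMatching := by
    intro v hv
    obtain ⟨w, hvw, huniq⟩ := hM.1 (hM.2 v)
    exact ⟨w, ⟨hv, hclosed v hv w hvw, hvw⟩, fun w' hw' ↦ huniq w' hw'.2.2⟩
  classical
  have : Fintype (M.induce S).verts := inferInstanceAs (Fintype (S : Set V))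
  have heven := hmatch.even_card
  simp only [Subgraph.induce_verts, Finset.toFinset_coe] at heven
  exact Nat.not_even_iff_odd.mpr hS heven

end SimpleGraph

instance : DecidableRel twoK4.Adj := fun _ _ ↦ by unfold twoK4; infer_instance

theorem twoK4_isRegularOfDegree : twoK4.IsRegularOfDegree 3 := fun v ↦ by fin_cases v <;> rfl

theorem twoK4_bridge :
    ∀ v ∈ ({0, 1, 2, 3, 4} : Finset (Fin 10)), ∀ w ∉ ({0, 1, 2, 3, 4} : Finset (Fin 10)),
      twoK4.Adj v w → s(v, w) = s(4, 9) := by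
  decide

/-- `twoK4` is not `(6,2)`-edge-colorable. -/
theorem stmt8 :
    ¬ ∃ C : Sym2 (Fin 10) → Finset (Fin 6),
      (∀ e ∈ twoK4.edgeSet, (C e).card = 2) ∧
      (∀ e ∈ twoK4.edgeSet, ∀ f ∈ twoK4.edgeSet, e ≠ f → EdgeIncident e f →
        Disjoint (C e) (C f)) := by
  rintro ⟨C, hcard, hdisj⟩
  have hC : twoK4.IsMultiEdgeColoring 2 C := ⟨hcard, hdisj⟩
  have hcentral : ∀ c, c ∈ C s(4, 9) := fun c ↦ by
    have h : (twoK4.colorClass C c).Adj 4 9 :=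
      (hC.isPerfectMatching_colorClass twoK4_isRegularOfDegree rfl c).mem_edgeSet_of_odd
        (by decide) twoK4_bridge
    exact (SimpleGraph.colorClass_adj.mp h).2
  have hsix := Finset.card_le_card (fun c _ ↦ hcentral c : Finset.univ ⊆ C s(4, 9))
  rw [Finset.card_univ, Fintype.card_fin, hcard _ (by simp [twoK4])] at hsix
  omega
end

section
/- For each odd integer $k \ge 5$, the flower snark $F_k$ contains a cycle of length $4k-2$ that omits exactly two vertices, and these two omitted vertices are adjacent. -/
/-- The flower snark `F_k` on vertices `(0,i) = wᵢ`, `(1,i) = xᵢ`, `(2,i) = yᵢ`, `(3,i) = zᵢ`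
(indices in `ZMod k`, with `i = 0` playing the role of index `k`): the cycle `z₁ ⋯ z_k`,
the cycle `x₁ ⋯ x_k y₁ ⋯ y_k`, and the stars `wᵢ` adjacent to `xᵢ, yᵢ, zᵢ`. -/
def flowerSnark (k : ℕ) : SimpleGraph (Fin 4 × ZMod k) := SimpleGraph.fromRel (fun u v =>
  (u.1 = 0 ∧ v.1 ≠ 0 ∧ u.2 = v.2) ∨
  (u.1 = 3 ∧ v.1 = 3 ∧ v.2 = u.2 + 1) ∨
  (u.1 = 1 ∧ v.1 = 1 ∧ v.2 = u.2 + 1 ∧ u.2 ≠ 0) ∨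
  (u.1 = 2 ∧ v.1 = 2 ∧ v.2 = u.2 + 1 ∧ u.2 ≠ 0) ∨
  (u.1 = 1 ∧ v.1 = 2 ∧ u.2 = 0 ∧ v.2 = 1) ∨
  (u.1 = 2 ∧ v.1 = 1 ∧ u.2 = 0 ∧ v.2 = 1))

namespace SimpleGraph

variable {V : Type*} {G : SimpleGraph V}

theorem exists_isCycle_of_isChain {u : V} {l : List V}
    (hchain : (u :: (l ++ [u])).IsChain G.Adj) (hnodup : (u :: l).Nodup) (hlen : 2 ≤ l.length) :
    ∃ p : G.Walk u u, p.IsCycle ∧ p.length = l.length + 1 ∧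
      ∀ x, x ∈ p.support ↔ x ∈ u :: l := by
  have hlast : (u :: (l ++ [u])).getLast (List.cons_ne_nil _ _) = u := by simp
  obtain ⟨p, hsupp⟩ : ∃ p : G.Walk u u, p.support = u :: (l ++ [u]) :=
    ⟨(Walk.ofSupport _ _ hchain).copy List.head_cons hlast,
      by rw [Walk.support_copy, Walk.support_ofSupport]⟩
  have hlength : p.length = l.length + 1 := by
    simpa [hsupp] using (Walk.length_support p).symm
  refine ⟨p, Walk.isCycle_iff_isPath_tail_and_le_length.2 ⟨?_, by omega⟩, hlength,
    fun x => ?_⟩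
  · rw [Walk.isPath_def, Walk.support_tail_of_not_nil _ (Walk.not_nil_iff_lt_length.2 (by omega)),
      hsupp]
    simpa using (List.perm_append_singleton u l).nodup_iff.2 hnodup
  · rw [hsupp]
    simp only [List.mem_cons, List.mem_append]
    tauto

end SimpleGraph

theorem List.nodup_of_mem_iff_notMem {α : Type*} [Fintype α] [DecidableEq α] {l : List α}
    {s : Finset α} (hmem : ∀ x, x ∈ l ↔ x ∉ s)
    (hlen : l.length + s.card = Fintype.card α) : l.Nodup := by
  have hs : l.toFinset = sᶜ := by ext x; simp [hmem]
  have hcard : l.toFinset.card = l.length := by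
    rw [hs, Finset.card_compl]
    omega
  exact Multiset.coe_nodup.1 (Multiset.toFinset_card_eq_card_iff_nodup.1 hcard)

theorem mem_map_natCast_iff {α : Type*} {k : ℕ} [NeZero k] {l : List (α × ℕ)}
    (hl : ∀ p ∈ l, p.2 < k) {a : α} {c : ZMod k} :
    (a, c) ∈ l.map (Prod.map id Nat.cast) ↔ (a, c.val) ∈ l := by
  simp only [List.mem_map, Prod.exists, Prod.map_apply, id, Prod.mk.injEq]
  constructor
  · rintro ⟨b, n, hmem, rfl, rfl⟩
    rwa [ZMod.val_natCast_of_lt (hl _ hmem)]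
  · exact fun h => ⟨a, c.val, h, rfl, ZMod.natCast_zmod_val c⟩

section

variable {k : ℕ}

theorem flowerSnark_adj_hub {t : Fin 4} (ht : t ≠ 0) (i : ZMod k) :
    (flowerSnark k).Adj (0, i) (t, i) := by
  simp [flowerSnark, ht, ht.symm]

theorem flowerSnark_adj_z [Nontrivial (ZMod k)] (i : ZMod k) :
    (flowerSnark k).Adj (3, i) (3, i + 1) := by
  simp [flowerSnark]

theorem flowerSnark_adj_rim [Nontrivial (ZMod k)] {t : Fin 4} (ht : t = 1 ∨ t = 2) {i : ZMod k}
    (hi : i ≠ 0) : (flowerSnark k).Adj (t, i) (t, i + 1) := by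
  rcases ht with rfl | rfl <;> simp [flowerSnark, hi]

end

/-- `F_k` on index pairs `(t, n) : Fin 4 × ℕ`, with `n` read modulo `k`. -/
abbrev flowerSnarkIdx (k : ℕ) : SimpleGraph (Fin 4 × ℕ) :=
  (flowerSnark k).comap (Prod.map id Nat.cast)

def zPath (a n : ℕ) : List (Fin 4 × ℕ) := (List.range' (a + 1) n).map ((3, ·))

/-- Continuing from `x_a`, sweep the spokes `a+1, …, a+2m` in pairs:
`x_{a+1} w_{a+1} y_{a+1} y_{a+2} w_{a+2} x_{a+2} x_{a+3} ⋯ x_{a+2m}`. -/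
def ladder : ℕ → ℕ → List (Fin 4 × ℕ)
  | _, 0 => []
  | a, m + 1 =>
    (1, a + 1) :: (0, a + 1) :: (2, a + 1) :: (2, a + 2) :: (0, a + 2) :: (1, a + 2) ::
      ladder (a + 2) m

section

variable {k : ℕ}

theorem flowerSnarkIdx_adj_hub {t : Fin 4} (ht : t ≠ 0) (n : ℕ) :
    (flowerSnarkIdx k).Adj (0, n) (t, n) :=
  flowerSnark_adj_hub ht _

theorem flowerSnarkIdx_adj_z (hk : 1 < k) (n : ℕ) : (flowerSnarkIdx k).Adj (3, n) (3, n + 1) := by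
  have : Fact (1 < k) := ⟨hk⟩
  simpa using flowerSnark_adj_z (n : ZMod k)

theorem flowerSnarkIdx_adj_rim {t : Fin 4} (ht : t = 1 ∨ t = 2) {n : ℕ} (hn : 0 < n)
    (hnk : n < k) : (flowerSnarkIdx k).Adj (t, n) (t, n + 1) := by
  have : Fact (1 < k) := ⟨by omega⟩
  have hn0 : (n : ZMod k) ≠ 0 := by
    rw [Ne, ZMod.natCast_eq_zero_iff]; exact Nat.not_dvd_of_pos_of_lt hn hnk
  simpa using flowerSnark_adj_rim ht hn0

theorem flowerSnarkIdx_adj_rim_wrap {t : Fin 4} (ht : t = 1 ∨ t = 2) {n : ℕ} (hn : 0 < n)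
    (hnk : n + 1 = k) : (flowerSnarkIdx k).Adj (t, n) (t, 0) := by
  have h := flowerSnarkIdx_adj_rim ht hn (by omega : n < k)
  rw [hnk] at h
  simpa using h

theorem flowerSnarkIdx_adj_x_zero_y_one : (flowerSnarkIdx k).Adj (1, 0) (2, 1) := by
  simp [flowerSnark]

theorem flowerSnarkIdx_adj_y_zero_x_one : (flowerSnarkIdx k).Adj (2, 0) (1, 1) := by
  simp [flowerSnark]

theorem isChain_zPath (hk : 1 < k) {a n : ℕ} {rest : List (Fin 4 × ℕ)}
    (hrest : ((3, a + n) :: rest).IsChain (flowerSnarkIdx k).Adj) :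
    ((3, a) :: (zPath a n ++ rest)).IsChain (flowerSnarkIdx k).Adj := by
  induction n generalizing a with
  | zero => simpa [zPath] using hrest
  | succ n ih =>
    rw [zPath, List.range'_succ, List.map_cons, List.cons_append, List.isChain_cons_cons]
    exact ⟨flowerSnarkIdx_adj_z hk a, ih (by rwa [Nat.add_right_comm])⟩

theorem isChain_ladder {a m : ℕ} (ha : 0 < a) (hak : a + 2 * m < k) {rest : List (Fin 4 × ℕ)}
    (hrest : ((1, a + 2 * m) :: rest).IsChain (flowerSnarkIdx k).Adj) :
    ((1, a) :: (ladder a m ++ rest)).IsChain (flowerSnarkIdx k).Adj := by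
  induction m generalizing a with
  | zero => simpa [ladder] using hrest
  | succ m ih =>
    simp only [ladder, List.cons_append, List.isChain_cons_cons]
    refine ⟨flowerSnarkIdx_adj_rim (.inl rfl) ha (by omega),
      (flowerSnarkIdx_adj_hub (by decide) _).symm, flowerSnarkIdx_adj_hub (by decide) _,
      flowerSnarkIdx_adj_rim (.inr rfl) (by omega) (by omega),
      (flowerSnarkIdx_adj_hub (by decide) _).symm, flowerSnarkIdx_adj_hub (by decide) _,
      ih (by omega) (by omega) (by rwa [show a + 2 + 2 * m = a + 2 * (m + 1) by ring])⟩

end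

theorem mem_zPath {a n : ℕ} {p : Fin 4 × ℕ} :
    p ∈ zPath a n ↔ p.1 = 3 ∧ a < p.2 ∧ p.2 ≤ a + n := by
  obtain ⟨t, i⟩ := p
  simp only [zPath, List.mem_map, List.mem_range'_1, Prod.mk.injEq]
  constructor
  · rintro ⟨j, hj, rfl, rfl⟩; omega
  · rintro ⟨rfl, h⟩; exact ⟨i, by omega, rfl, rfl⟩

theorem mem_ladder {a m : ℕ} {p : Fin 4 × ℕ} :
    p ∈ ladder a m ↔ p.1 ≠ 3 ∧ a < p.2 ∧ p.2 ≤ a + 2 * m := by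
  induction m generalizing a with
  | zero => simp [ladder]
  | succ m ih =>
    obtain ⟨t, i⟩ := p
    simp only [ladder, List.mem_cons, ih, Prod.mk.injEq]
    fin_cases t <;> simp <;> omega

theorem length_ladder (a m : ℕ) : (ladder a m).length = 6 * m := by
  induction m generalizing a with
  | zero => rfl
  | succ m ih => simp only [ladder, List.length_cons, ih]; ring

/-- The cycle of `F_k`, `k = 2m + 3`, omitting `w_0` and `z_0`, listed after its first vertex
`z_1`: `z_2 ⋯ z_{k-1} w_{k-1} y_{k-1} y_0 x_1`, the ladder through spokes `2, …, k-2`, then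
`x_{k-1} x_0 y_1 w_1`. -/
def longCycleTail (m : ℕ) : List (Fin 4 × ℕ) :=
  zPath 1 (2 * m + 1) ++ (0, 2 * m + 2) :: (2, 2 * m + 2) :: (2, 0) :: (1, 1) ::
    (ladder 1 m ++ [(1, 2 * m + 2), (1, 0), (2, 1), (0, 1)])

theorem isChain_longCycle (m : ℕ) :
    ((3, 1) :: (longCycleTail m ++ [(3, 1)])).IsChain (flowerSnarkIdx (2 * m + 3)).Adj := by
  simp only [longCycleTail, List.append_assoc, List.cons_append, List.nil_append]
  refine isChain_zPath (by omega) ?_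
  rw [show 1 + (2 * m + 1) = 2 * m + 2 by ring]
  simp only [List.isChain_cons_cons]
  refine ⟨(flowerSnarkIdx_adj_hub (by decide) _).symm, flowerSnarkIdx_adj_hub (by decide) _,
    flowerSnarkIdx_adj_rim_wrap (.inr rfl) (by omega) (by omega),
    flowerSnarkIdx_adj_y_zero_x_one, isChain_ladder (by omega) (by omega) ?_⟩
  rw [show 1 + 2 * m = 2 * m + 1 by ring]
  simp only [List.isChain_cons_cons, List.isChain_singleton, and_true]
  exact ⟨flowerSnarkIdx_adj_rim (.inl rfl) (by omega) (by omega),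
    flowerSnarkIdx_adj_rim_wrap (.inl rfl) (by omega) (by omega), flowerSnarkIdx_adj_x_zero_y_one,
    (flowerSnarkIdx_adj_hub (by decide) _).symm, flowerSnarkIdx_adj_hub (by decide) _⟩

theorem mem_longCycle {m : ℕ} {p : Fin 4 × ℕ} :
    p ∈ (3, 1) :: longCycleTail m ↔ p.2 < 2 * m + 3 ∧ (p.2 = 0 → p.1 = 1 ∨ p.1 = 2) := by
  obtain ⟨t, i⟩ := p
  simp only [longCycleTail, List.mem_cons, List.mem_append, mem_zPath, mem_ladder,
    Prod.mk.injEq]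
  fin_cases t <;> simp <;> omega

theorem length_longCycleTail (m : ℕ) : (longCycleTail m).length = 8 * m + 9 := by
  simp [longCycleTail, zPath, length_ladder]
  ring

theorem mem_longCycle_map {m : ℕ} {v : Fin 4 × ZMod (2 * m + 3)} :
    v ∈ ((3, 1) :: longCycleTail m).map (Prod.map id Nat.cast) ↔
      v ≠ (0, 0) ∧ v ≠ (3, 0) := by
  obtain ⟨t, c⟩ := v
  rw [mem_map_natCast_iff (fun p hp => (mem_longCycle.1 hp).1), mem_longCycle]
  simp only [ne_eq, Prod.mk.injEq, ← ZMod.val_eq_zero, ZMod.val_lt c, true_and]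
  fin_cases t <;> simp

theorem nodup_longCycle_map (m : ℕ) :
    (((3, 1) :: longCycleTail m).map (Prod.map id ((↑) : ℕ → ZMod (2 * m + 3)))).Nodup := by
  refine List.nodup_of_mem_iff_notMem (s := {(0, 0), (3, 0)}) (fun v => ?_) ?_
  · rw [mem_longCycle_map]
    simp
  · simp [length_longCycleTail, ZMod.card]
    ring

/-- For each odd `k ≥ 5`, the flower snark `F_k` contains a cycle of length `4k - 2` omitting
exactly two vertices, and the two omitted vertices are adjacent. -/
theorem stmt11 (k : ℕ) (hk : 5 ≤ k) (hodd : Odd k) :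
    ∃ u v : Fin 4 × ZMod k, (flowerSnark k).Adj u v ∧
      ∃ (w : Fin 4 × ZMod k) (p : (flowerSnark k).Walk w w),
        p.IsCycle ∧ p.length = 4 * k - 2 ∧
        ∀ x, x ∈ p.support ↔ (x ≠ u ∧ x ≠ v) := by
  obtain ⟨m, rfl⟩ : ∃ m, k = 2 * m + 3 := by
    obtain ⟨j, rfl⟩ := hodd
    exact ⟨j - 1, by omega⟩
  obtain ⟨p, hcycle, hlength, hsupp⟩ := SimpleGraph.exists_isCycle_of_isChain
    (by simpa only [List.map_cons, List.map_append, List.map_nil] using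
      (List.isChain_map (R := (flowerSnark _).Adj) _).2 (isChain_longCycle m))
    (nodup_longCycle_map m) (by simp [length_longCycleTail])
  refine ⟨(0, 0), (3, 0), flowerSnark_adj_hub (by decide) 0, _, p, hcycle, ?_, fun v => ?_⟩
  · rw [hlength, List.length_map, length_longCycleTail]
    omega
  · rw [hsupp, ← List.map_cons, mem_longCycle_map]
end

section
/- Let $G$ be a 3-regular graph on $n$ vertices with girth at least 5 that contains a cycle of length $n-2$ whose two omitted vertices are adjacent. Then $G$ is $(7,2)$-edge-choosable, assuming the theorem that every 3-regular graph with a MED decomposition is $(7,2)$-edge-choosable. -/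
/-- A set of edges forming a matching: pairwise non-incident edges. -/
def IsMatchingSet {V : Type*} (E₁ : Set (Sym2 V)) : Prop :=
  ∀ e ∈ E₁, ∀ f ∈ E₁, e ≠ f → ¬ EdgeIncident e f

/-- The edge set `E₂` forms a disjoint union of even cycles: every vertex touched by `E₂`
has exactly two incident edges of `E₂`, and each component has evenly many vertices. -/
def IsEvenCyclesSet {V : Type*} (E₂ : Set (Sym2 V)) : Prop :=
  (∀ v ∈ (SimpleGraph.fromEdgeSet E₂).support, edeg (SimpleGraph.fromEdgeSet E₂) v = 2) ∧
  (∀ v ∈ (SimpleGraph.fromEdgeSet E₂).support,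
    Even ((((SimpleGraph.fromEdgeSet E₂).connectedComponentMk v).supp).ncard))

/-- The edge set `E₃` forms vertex-disjoint double-stars (6-vertex trees with two adjacent
degree-3 centers, each with two leaves) whose leaves are independent in `G`. -/
def IsDoubleStarsSet {V : Type*} (G : SimpleGraph V) (E₃ : Set (Sym2 V)) : Prop :=
  let H := SimpleGraph.fromEdgeSet E₃
  (∀ v ∈ H.support, edeg H v = 1 ∨ edeg H v = 3) ∧
  (∀ v ∈ H.support, edeg H v = 3 → ({u | u ∈ H.neighborSet v ∧ edeg H u = 3}).ncard = 1) ∧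
  (∀ v ∈ H.support, edeg H v = 1 → ∀ u, H.Adj v u → edeg H u = 3) ∧
  (∀ u v, u ∈ H.support → v ∈ H.support → edeg H u = 1 → edeg H v = 1 → ¬ G.Adj u v)

/-- A MED decomposition of `G`: a partition of its edge set into a matching `E₁`,
a disjoint union of even cycles `E₂`, and independent double-stars `E₃`. -/
def IsMEDDecomposition {V : Type*} (G : SimpleGraph V) (E₁ E₂ E₃ : Set (Sym2 V)) : Prop :=
  E₁ ∪ E₂ ∪ E₃ = G.edgeSet ∧
  Disjoint E₁ E₂ ∧ Disjoint E₁ E₃ ∧ Disjoint E₂ E₃ ∧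
  IsMatchingSet E₁ ∧ IsEvenCyclesSet E₂ ∧ IsDoubleStarsSet G E₃


/-! Let `a, b` and `c, d` be the other neighbours of `u` and `v`. Girth at least 5 makes
`u, v, a, b, c, d` distinct and `a, b, c, d` pairwise non-adjacent, so the five edges at `u` and
`v` form a double star with independent leaves. The cycle `p` covers every other vertex; it is
even because a cubic graph has an even number of vertices. Each vertex of `p` has exactly one
edge off the cycle and all edges at `u` and `v` lie in the double star, so the remaining edges
form a matching, completing a MED decomposition. -/

open SimpleGraph

namespace SimpleGraph

variable {V : Type*} {G : SimpleGraph V}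

lemma egirth_le_three {x y z : V} (hxy : G.Adj x y) (hyz : G.Adj y z) (hzx : G.Adj z x) :
    G.egirth ≤ 3 := by
  have hc : (Walk.cons hxy (.cons hyz (.cons hzx .nil))).IsCycle := by
    simp [Walk.isCycle_def, Walk.isTrail_def, hxy.ne, hyz.ne, hzx.ne, hxy.ne', hzx.ne']
  simpa using hc.egirth_le_length

lemma egirth_le_four {x y z t : V} (hxy : G.Adj x y) (hyz : G.Adj y z) (hzt : G.Adj z t)
    (htx : G.Adj t x) (hxz : x ≠ z) (hyt : y ≠ t) : G.egirth ≤ 4 := by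
  have hc : (Walk.cons hxy (.cons hyz (.cons hzt (.cons htx .nil)))).IsCycle := by
    simp [Walk.isCycle_def, Walk.isTrail_def, hxy.ne, hyz.ne, hzt.ne, htx.ne, hxz, hxz.symm,
      hyt, hxy.ne', htx.ne']
  simpa using hc.egirth_le_length

namespace Walk

variable {u v : V}

lemma fromEdgeSet_edgeSet_eq_spanningCoe (p : G.Walk u v) :
    fromEdgeSet p.edgeSet = p.toSubgraph.spanningCoe := by
  rw [← edgeSet_toSubgraph, ← Subgraph.edgeSet_spanningCoe, fromEdgeSet_edgeSet]

lemma supp_connectedComponentMk_spanningCoe_toSubgraph (p : G.Walk u v) {x : V}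
    (hx : x ∈ p.support) :
    (p.toSubgraph.spanningCoe.connectedComponentMk x).supp = {y | y ∈ p.support} := by
  ext y
  rw [ConnectedComponent.mem_supp_iff, ConnectedComponent.eq, Set.mem_ofPred_eq]
  constructor
  · intro hyx
    obtain rfl | hne := eq_or_ne y x
    · exact hx
    obtain ⟨z, hyz⟩ := mem_support_of_reachable hne hyx
    exact mem_support_of_adj_toSubgraph hyz
  · intro hy
    have hconn := p.toSubgraph_connected.preconnected
      ⟨y, p.mem_verts_toSubgraph.mpr hy⟩ ⟨x, p.mem_verts_toSubgraph.mpr hx⟩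
    exact hconn.map ⟨Subtype.val, id⟩

lemma IsCycle.ncard_support {p : G.Walk u u} (hp : p.IsCycle) :
    {x | x ∈ p.support}.ncard = p.length := by
  classical
  have htail : {x | x ∈ p.support} = {x | x ∈ p.support.tail} := by
    ext x
    rw [Set.mem_ofPred_eq, Set.mem_ofPred_eq, ← p.cons_tail_support, List.tail_cons,
      List.mem_cons, or_iff_right_iff_imp]
    rintro rfl
    exact p.end_mem_tail_support hp.not_nil
  rw [htail, ← List.coe_toFinset, Set.ncard_coe_finset,
    List.toFinset_card_of_nodup hp.support_nodup, List.length_tail, length_support,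
    Nat.add_sub_cancel]

lemma IsCycle.isEvenCyclesSet_edgeSet {p : G.Walk u u} (hp : p.IsCycle) (heven : Even p.length) :
    IsEvenCyclesSet p.edgeSet := by
  rw [IsEvenCyclesSet, fromEdgeSet_edgeSet_eq_spanningCoe]
  constructor
  · rintro x ⟨y, hxy⟩
    exact hp.isCycles_spanningCoe_toSubgraph ⟨y, hxy⟩
  · rintro x ⟨y, hxy⟩
    rw [p.supp_connectedComponentMk_spanningCoe_toSubgraph (mem_support_of_adj_toSubgraph hxy),
      hp.ncard_support]
    exact heven

end Walk

end SimpleGraph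

section CubicGraphs

variable {V : Type*} {G : SimpleGraph V}

lemma even_card_of_forall_odd_edeg [Fintype V] (h : ∀ v, Odd (edeg G v)) :
    Even (Fintype.card V) := by
  classical
  have hdeg : ∀ v, G.degree v = edeg G v := fun v => by
    rw [edeg, Set.ncard_eq_toFinset_card', Set.toFinset_card, card_neighborSet_eq_degree]
  simpa [hdeg, h] using G.even_card_odd_degree_vertices

lemma isMatchingSet_edgeSet_sdiff {F : Set (Sym2 V)}
    (h : ∀ x, {y | G.Adj x y ∧ s(x, y) ∉ F}.Subsingleton) : IsMatchingSet (G.edgeSet \ F) := by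
  rintro e ⟨he, heF⟩ f ⟨hf, hfF⟩ hef ⟨x, hxe, hxf⟩
  obtain ⟨y, rfl⟩ := Sym2.mem_iff_exists.mp hxe
  obtain ⟨z, rfl⟩ := Sym2.mem_iff_exists.mp hxf
  exact hef (congrArg _ (h x ⟨he, heF⟩ ⟨hf, hfF⟩))

lemma exists_neighborSet_eq_of_edeg_eq_three {u v : V} (h : edeg G u = 3) (huv : G.Adj u v) :
    ∃ a b, a ≠ v ∧ b ≠ v ∧ a ≠ b ∧ G.neighborSet u = {v, a, b} := by
  have hv : v ∈ G.neighborSet u := huv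
  have hcard : (G.neighborSet u \ {v}).ncard = 2 := by
    rw [Set.ncard_sdiff_singleton_of_mem hv, ← edeg, h]
  obtain ⟨a, b, hab, hN⟩ := Set.ncard_eq_two.mp hcard
  have ha : a ∈ G.neighborSet u \ {v} := hN ▸ Set.mem_insert a {b}
  have hb : b ∈ G.neighborSet u \ {v} := hN ▸ Set.mem_insert_of_mem a rfl
  refine ⟨a, b, ha.2, hb.2, hab, ?_⟩
  rw [← hN, Set.insert_sdiff_singleton, Set.insert_eq_of_mem hv]

lemma exists_neighborSet_eq_of_adj_of_five_le_egirth (hreg : ∀ x, edeg G x = 3)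
    (hg : 5 ≤ G.egirth) {u v : V} (huv : G.Adj u v) :
    ∃ a b c d, G.neighborSet u = {v, a, b} ∧ G.neighborSet v = {u, c, d} ∧
      [u, v, a, b, c, d].Nodup ∧ G.IsIndepSet {a, b, c, d} := by
  obtain ⟨a, b, hav, hbv, hab, hNu⟩ := exists_neighborSet_eq_of_edeg_eq_three (hreg u) huv
  obtain ⟨c, d, hcu, hdu, hcd, hNv⟩ := exists_neighborSet_eq_of_edeg_eq_three (hreg v) huv.symm
  have hua : G.Adj u a := by simp [← mem_neighborSet, hNu]
  have hub : G.Adj u b := by simp [← mem_neighborSet, hNu]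
  have hvc : G.Adj v c := by simp [← mem_neighborSet, hNv]
  have hvd : G.Adj v d := by simp [← mem_neighborSet, hNv]
  have no_triangle : ∀ {x y z}, G.Adj x y → G.Adj y z → ¬ G.Adj z x := fun h1 h2 h3 =>
    absurd (hg.trans (egirth_le_three h1 h2 h3)) (by decide)
  have no_square : ∀ {x y z t}, G.Adj x y → G.Adj y z → G.Adj z t → x ≠ z → y ≠ t →
      ¬ G.Adj t x := fun h1 h2 h3 hxz hyt h4 =>
    absurd (hg.trans (egirth_le_four h1 h2 h3 h4 hxz hyt)) (by decide)
  have hac : a ≠ c := by rintro rfl; exact no_triangle huv hvc hua.symm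
  have had : a ≠ d := by rintro rfl; exact no_triangle huv hvd hua.symm
  have hbc : b ≠ c := by rintro rfl; exact no_triangle huv hvc hub.symm
  have hbd : b ≠ d := by rintro rfl; exact no_triangle huv hvd hub.symm
  have hnab : ¬ G.Adj a b := fun h => no_triangle hua h hub.symm
  have hncd : ¬ G.Adj c d := fun h => no_triangle hvc h hvd.symm
  have hnac : ¬ G.Adj a c := fun h => no_square hua h hvc.symm hcu.symm hav huv.symm
  have hnad : ¬ G.Adj a d := fun h => no_square hua h hvd.symm hdu.symm hav huv.symm
  have hnbc : ¬ G.Adj b c := fun h => no_square hub h hvc.symm hcu.symm hbv huv.symm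
  have hnbd : ¬ G.Adj b d := fun h => no_square hub h hvd.symm hdu.symm hbv huv.symm
  refine ⟨a, b, c, d, hNu, hNv, ?_, ?_⟩
  · simp [huv.ne, hua.ne, hub.ne, hcu.symm, hdu.symm, hav.symm, hbv.symm, hvc.ne, hvd.ne, hab, hac,
      had, hbc, hbd, hcd]
  · clear no_triangle no_square
    simp only [IsIndepSet, Set.pairwise_insert, Set.pairwise_singleton, Set.mem_insert_iff,
      Set.mem_singleton_iff]
    grind [Adj.symm]

def doubleStar (u v a b c d : V) : SimpleGraph V :=
  fromEdgeSet {s(u, v), s(u, a), s(u, b), s(v, c), s(v, d)}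

section DoubleStar

variable {u v a b c d : V}

lemma support_doubleStar_subset : (doubleStar u v a b c d).support ⊆ {u, v, a, b, c, d} := by
  intro x hx
  obtain ⟨y, hxy⟩ := (mem_support _).mp hx
  simp only [doubleStar, fromEdgeSet_adj, Set.mem_insert_iff, Set.mem_singleton_iff,
    Sym2.eq_iff] at hxy ⊢
  grind

lemma doubleStar_adj_center {x y : V} (h : (doubleStar u v a b c d).Adj x y) :
    (x = u ∨ x = v) ∨ (y = u ∨ y = v) := by
  simp only [doubleStar, fromEdgeSet_adj, Set.mem_insert_iff, Set.mem_singleton_iff,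
    Sym2.eq_iff] at h
  grind

lemma doubleStar_le (hNu : G.neighborSet u = {v, a, b}) (hNv : G.neighborSet v = {u, c, d}) :
    doubleStar u v a b c d ≤ G := by
  have hu : ∀ y ∈ ({v, a, b} : Set V), G.Adj u y := fun y hy => by rwa [← mem_neighborSet, hNu]
  have hv : ∀ y ∈ ({u, c, d} : Set V), G.Adj v y := fun y hy => by rwa [← mem_neighborSet, hNv]
  intro x y hxy
  simp only [doubleStar, fromEdgeSet_adj, Set.mem_insert_iff, Set.mem_singleton_iff,
    Sym2.eq_iff] at hxy
  grind [Adj.symm]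

variable (hnodup : [u, v, a, b, c, d].Nodup)
include hnodup

lemma neighborSet_doubleStar_left_center :
    (doubleStar u v a b c d).neighborSet u = {v, a, b} := by
  simp only [List.nodup_cons, List.mem_cons, List.not_mem_nil] at hnodup
  ext y
  simp only [mem_neighborSet, doubleStar, fromEdgeSet_adj, Set.mem_insert_iff,
    Set.mem_singleton_iff, Sym2.eq_iff]
  grind

lemma neighborSet_doubleStar_right_center :
    (doubleStar u v a b c d).neighborSet v = {u, c, d} := by
  simp only [List.nodup_cons, List.mem_cons, List.not_mem_nil] at hnodup
  ext y
  simp only [mem_neighborSet, doubleStar, fromEdgeSet_adj, Set.mem_insert_iff,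
    Set.mem_singleton_iff, Sym2.eq_iff]
  grind

lemma neighborSet_doubleStar_left_leaf {x : V} (hx : x = a ∨ x = b) :
    (doubleStar u v a b c d).neighborSet x = {u} := by
  simp only [List.nodup_cons, List.mem_cons, List.not_mem_nil] at hnodup
  ext y
  simp only [mem_neighborSet, doubleStar, fromEdgeSet_adj, Set.mem_insert_iff,
    Set.mem_singleton_iff, Sym2.eq_iff]
  grind

lemma neighborSet_doubleStar_right_leaf {x : V} (hx : x = c ∨ x = d) :
    (doubleStar u v a b c d).neighborSet x = {v} := by
  simp only [List.nodup_cons, List.mem_cons, List.not_mem_nil] at hnodup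
  ext y
  simp only [mem_neighborSet, doubleStar, fromEdgeSet_adj, Set.mem_insert_iff,
    Set.mem_singleton_iff, Sym2.eq_iff]
  grind

lemma edeg_doubleStar_of_center {x : V} (hx : x = u ∨ x = v) :
    edeg (doubleStar u v a b c d) x = 3 := by
  have hne := hnodup
  simp only [List.nodup_cons, List.mem_cons, List.not_mem_nil] at hne
  rcases hx with rfl | rfl
  · rw [edeg, neighborSet_doubleStar_left_center hnodup]
    exact Set.ncard_eq_three.mpr ⟨_, _, _, by grind, by grind, by grind, rfl⟩
  · rw [edeg, neighborSet_doubleStar_right_center hnodup]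
    exact Set.ncard_eq_three.mpr ⟨_, _, _, by grind, by grind, by grind, rfl⟩

lemma edeg_doubleStar_of_leaf {x : V} (hx : x = a ∨ x = b ∨ x = c ∨ x = d) :
    edeg (doubleStar u v a b c d) x = 1 := by
  obtain h | h : (x = a ∨ x = b) ∨ (x = c ∨ x = d) := by tauto
  · rw [edeg, neighborSet_doubleStar_left_leaf hnodup h, Set.ncard_singleton]
  · rw [edeg, neighborSet_doubleStar_right_leaf hnodup h, Set.ncard_singleton]

lemma edeg_doubleStar_eq_three_iff {x : V} (hx : x ∈ (doubleStar u v a b c d).support) :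
    edeg (doubleStar u v a b c d) x = 3 ↔ x = u ∨ x = v := by
  refine ⟨fun h => ?_, edeg_doubleStar_of_center hnodup⟩
  by_contra hc
  have hleaf : x = a ∨ x = b ∨ x = c ∨ x = d := by
    have : x = u ∨ x = v ∨ x = a ∨ x = b ∨ x = c ∨ x = d := support_doubleStar_subset hx
    tauto
  rw [edeg_doubleStar_of_leaf hnodup hleaf] at h
  omega

lemma edeg_doubleStar_eq_one_iff {x : V} (hx : x ∈ (doubleStar u v a b c d).support) :
    edeg (doubleStar u v a b c d) x = 1 ↔ x = a ∨ x = b ∨ x = c ∨ x = d := by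
  refine ⟨fun h => ?_, edeg_doubleStar_of_leaf hnodup⟩
  by_contra hc
  have hcenter : x = u ∨ x = v := by
    have : x = u ∨ x = v ∨ x = a ∨ x = b ∨ x = c ∨ x = d := support_doubleStar_subset hx
    tauto
  rw [edeg_doubleStar_of_center hnodup hcenter] at h
  omega

lemma isDoubleStarsSet_doubleStar (hind : G.IsIndepSet {a, b, c, d}) :
    IsDoubleStarsSet G (doubleStar u v a b c d).edgeSet := by
  simp only [IsDoubleStarsSet, fromEdgeSet_edgeSet]
  refine ⟨fun x hx => ?_, fun x hx h3 => ?_, fun x hx h1 y hxy => ?_, fun x y hx hy hx1 hy1 => ?_⟩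
  · have : x = u ∨ x = v ∨ x = a ∨ x = b ∨ x = c ∨ x = d := support_doubleStar_subset hx
    rw [edeg_doubleStar_eq_three_iff hnodup hx, edeg_doubleStar_eq_one_iff hnodup hx]
    tauto
  · rw [Set.ncard_eq_one]
    rcases (edeg_doubleStar_eq_three_iff hnodup hx).mp h3 with rfl | rfl
    · refine ⟨v, Set.ext fun y => ⟨fun ⟨hy, hy3⟩ => ?_, ?_⟩⟩
      · rw [edeg_doubleStar_eq_three_iff hnodup ((mem_support _).mpr ⟨_, hy.symm⟩)] at hy3
        exact hy3.resolve_left ((mem_neighborSet _ _ _).mp hy).ne'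
      · rintro rfl
        refine ⟨?_, edeg_doubleStar_of_center hnodup (.inr rfl)⟩
        simp [neighborSet_doubleStar_left_center hnodup]
    · refine ⟨u, Set.ext fun y => ⟨fun ⟨hy, hy3⟩ => ?_, ?_⟩⟩
      · rw [edeg_doubleStar_eq_three_iff hnodup ((mem_support _).mpr ⟨_, hy.symm⟩)] at hy3
        exact hy3.resolve_right ((mem_neighborSet _ _ _).mp hy).ne'
      · rintro rfl
        refine ⟨?_, edeg_doubleStar_of_center hnodup (.inl rfl)⟩
        simp [neighborSet_doubleStar_right_center hnodup]
  · refine edeg_doubleStar_of_center hnodup ((doubleStar_adj_center hxy).resolve_left ?_)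
    intro hcenter
    rw [edeg_doubleStar_of_center hnodup hcenter] at h1
    omega
  · rw [edeg_doubleStar_eq_one_iff hnodup hx] at hx1
    rw [edeg_doubleStar_eq_one_iff hnodup hy] at hy1
    obtain rfl | hxy := eq_or_ne x y
    · exact G.loopless.irrefl x
    exact hind hx1 hy1 hxy

end DoubleStar

variable {w u v a b c d : V} {p : G.Walk w w}

lemma isMatchingSet_of_cycle_doubleStar (hreg : ∀ x, edeg G x = 3) (hp : p.IsCycle)
    (hsupp : ∀ x, x ∈ p.support ↔ x ≠ u ∧ x ≠ v)
    (hNu : G.neighborSet u = {v, a, b}) (hNv : G.neighborSet v = {u, c, d}) :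
    IsMatchingSet (G.edgeSet \ (p.edgeSet ∪ (doubleStar u v a b c d).edgeSet)) := by
  refine isMatchingSet_edgeSet_sdiff fun x => ?_
  by_cases hx : x = u ∨ x = v
  · rintro y ⟨hxy, hxyF⟩
    refine absurd (Or.inr ?_) hxyF
    rw [mem_edgeSet, doubleStar, fromEdgeSet_adj]
    refine ⟨?_, hxy.ne⟩
    rcases hx with rfl | rfl
    · rw [← mem_neighborSet, hNu] at hxy
      simp only [Set.mem_insert_iff, Set.mem_singleton_iff] at hxy ⊢
      grind
    · rw [← mem_neighborSet, hNv] at hxy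
      simp only [Set.mem_insert_iff, Set.mem_singleton_iff] at hxy ⊢
      grind
  · have hxp : x ∈ p.support := (hsupp x).mpr (not_or.mp hx)
    have hdeg : (G.neighborSet x).ncard = 3 := hreg x
    have hfin : (G.neighborSet x).Finite := Set.finite_of_ncard_ne_zero (by rw [hdeg]; decide)
    have hcard : (G.neighborSet x \ p.toSubgraph.neighborSet x).ncard = 1 := by
      have := Set.ncard_sdiff_add_ncard_of_subset (p.toSubgraph.neighborSet_subset x) hfin
      rw [hp.ncard_neighborSet_toSubgraph_eq_two hxp, hdeg] at this
      omega
    refine Set.Subsingleton.anti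
      ((Set.ncard_le_one (hfin.subset Set.sdiff_subset)).mp hcard.le) ?_
    rintro y ⟨hxy, hxyF⟩
    exact ⟨hxy, fun h => hxyF (Or.inl (Walk.adj_toSubgraph_iff_mem_edges.mp h))⟩

lemma isMEDDecomposition_of_cycle_doubleStar (hreg : ∀ x, edeg G x = 3) (hp : p.IsCycle)
    (heven : Even p.length) (hsupp : ∀ x, x ∈ p.support ↔ x ≠ u ∧ x ≠ v)
    (hNu : G.neighborSet u = {v, a, b}) (hNv : G.neighborSet v = {u, c, d})
    (hnodup : [u, v, a, b, c, d].Nodup) (hind : G.IsIndepSet {a, b, c, d}) :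
    IsMEDDecomposition G (G.edgeSet \ (p.edgeSet ∪ (doubleStar u v a b c d).edgeSet)) p.edgeSet
      (doubleStar u v a b c d).edgeSet := by
  have hsub : p.edgeSet ∪ (doubleStar u v a b c d).edgeSet ⊆ G.edgeSet :=
    Set.union_subset p.edges_subset_edgeSet (edgeSet_mono (doubleStar_le hNu hNv))
  refine ⟨by rw [Set.union_assoc, Set.sdiff_union_of_subset hsub],
    Set.disjoint_sdiff_left.mono_right Set.subset_union_left,
    Set.disjoint_sdiff_left.mono_right Set.subset_union_right, ?_,
    isMatchingSet_of_cycle_doubleStar hreg hp hsupp hNu hNv, hp.isEvenCyclesSet_edgeSet heven,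
    isDoubleStarsSet_doubleStar hnodup hind⟩
  rw [Set.disjoint_left]
  intro e hep hes
  induction e using Sym2.ind with
  | h x y =>
    have hx : x ∈ p.support := p.fst_mem_support_of_mem_edges hep
    have hy : y ∈ p.support := p.snd_mem_support_of_mem_edges hep
    rcases doubleStar_adj_center hes with hc | hc <;> grind

end CubicGraphs

/-- Let `G` be a 3-regular graph on `n` vertices with girth at least 5 containing a cycle of
length `n - 2` omitting exactly two vertices, these two being adjacent.  Assuming the main
theorem (every 3-regular graph with a MED decomposition is `(7,2)`-edge-choosable), `G` is
`(7,2)`-edge-choosable. -/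
theorem stmt19 {V : Type} [Fintype V] (G : SimpleGraph V)
    (hreg : ∀ v, edeg G v = 3)
    (hgirth : 5 ≤ G.egirth)
    (u v : V) (huv : G.Adj u v)
    (w : V) (p : G.Walk w w) (hp : p.IsCycle)
    (hlen : p.length = Fintype.card V - 2)
    (hsupp : ∀ x, x ∈ p.support ↔ (x ≠ u ∧ x ≠ v))
    (main : ∀ (W : Type) [Fintype W] (H : SimpleGraph W), (∀ x, edeg H x = 3) →
      (∃ E₁ E₂ E₃, IsMEDDecomposition H E₁ E₂ E₃) → EdgeChoosable H 7 2) :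
    EdgeChoosable G 7 2 := by
  obtain ⟨a, b, c, d, hNu, hNv, hnodup, hind⟩ :=
    exists_neighborSet_eq_of_adj_of_five_le_egirth hreg hgirth huv
  have heven : Even p.length := by
    rw [hlen]
    exact (even_card_of_forall_odd_edeg fun x => by rw [hreg]; decide).tsub (by decide)
  exact main V G hreg
    ⟨_, _, _, isMEDDecomposition_of_cycle_doubleStar hreg hp heven hsupp hNu hNv hnodup hind⟩
end
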